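/- Let (X, Y) be a centered bivariate Gaussian vector with Var(X) = Var(Y) = 1 and correlation ρ ∈ [-1, 1]. Then E[sign(X) · sign(Y)] = (2/π) · arcsin(ρ), where sign(0) = 0. -/

import Mathlib

/-!
For `|ρ| < 1` the density factors as `e^{-x²/2} e^{-(y - ρx)²/(2s²)} / (2πs)` with
`s = √(1 - ρ²)`. Integrating out `y` leaves
`(2π)⁻¹ ∫ sign x · e^{-x²/2} ∫_{-cx}^{cx} e^{-t²/2} dt dx`, where `c = ρ / s`.
The substitution `t = u x` rewrites `sign x ∫_{-cx}^{cx} e^{-t²/2} dt` as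
`∫_{-c}^{c} |x| e^{-u²x²/2} du`; after Fubini, `∫ |x| e^{-(1 + u²)x²/2} dx = 2 / (1 + u²)`
integrates to `4 arctan c`, and `arctan c = arcsin ρ`.
For `ρ = ±1`, `sign X · sign Y = ±1` almost surely.
-/

open MeasureTheory ProbabilityTheory Real

/-- Law of a centered bivariate Gaussian vector with unit variances and correlation `ρ`:
for `|ρ| < 1` it is given by the usual density, and for `ρ = ±1` it is the law of `(X, ±X)`
where `X` is standard Gaussian. -/
noncomputable def biGaussian (ρ : ℝ) : Measure (ℝ × ℝ) :=
  if ρ = 1 then (gaussianReal 0 1).map (fun x => (x, x))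
  else if ρ = -1 then (gaussianReal 0 1).map (fun x => (x, -x))
  else (volume : Measure (ℝ × ℝ)).withDensity fun p =>
    ENNReal.ofReal ((2 * π * Real.sqrt (1 - ρ ^ 2))⁻¹ *
      Real.exp (-(p.1 ^ 2 + p.2 ^ 2 - 2 * ρ * p.1 * p.2) / (2 * (1 - ρ ^ 2))))

open Set

namespace Real

lemma measurable_sign : Measurable Real.sign :=
  Measurable.ite measurableSet_Iio measurable_const
    (Measurable.ite measurableSet_Ioi measurable_const measurable_const)

lemma measurable_sign_mul_sign : Measurable fun p : ℝ × ℝ => sign p.1 * sign p.2 :=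
  (measurable_sign.comp measurable_fst).mul (measurable_sign.comp measurable_snd)

lemma abs_sign_le_one (r : ℝ) : |sign r| ≤ 1 := by
  rcases sign_apply_eq r with h | h | h <;> simp [h]

lemma abs_sign_mul_sign_le_one (x y : ℝ) : |sign x * sign y| ≤ 1 := by
  rw [abs_mul]
  exact mul_le_one₀ (abs_sign_le_one x) (abs_nonneg _) (abs_sign_le_one y)

lemma sign_mul_of_pos {s : ℝ} (hs : 0 < s) (r : ℝ) : sign (s * r) = sign r := by
  rcases lt_trichotomy r 0 with hr | rfl | hr
  · rw [sign_of_neg hr, sign_of_neg (mul_neg_of_pos_of_neg hs hr)]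
  · simp
  · rw [sign_of_pos hr, sign_of_pos (mul_pos hs hr)]

end Real

lemma integral_sign_add_mul_of_even {f : ℝ → ℝ} (hf : Integrable f)
    (heven : f.Even) (a : ℝ) :
    ∫ t, sign (a + t) * f t = ∫ t in -a..a, f t := by
  have hsf : Integrable fun t => sign (a + t) * f t :=
    hf.bdd_mul ((measurable_sign.comp (measurable_const_add a)).aestronglyMeasurable)
      (.of_forall fun t => by simpa using abs_sign_le_one (a + t))
  have h_left : ∫ t in Iic (-a), sign (a + t) * f t = -∫ t in Iic (-a), f t := by
    rw [← setIntegral_congr_set Iio_ae_eq_Iic, ← setIntegral_congr_set Iio_ae_eq_Iic,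
      ← integral_neg]
    exact setIntegral_congr_fun measurableSet_Iio fun t (ht : t < -a) => by
      rw [sign_of_neg (by linarith), neg_one_mul]
  have h_reflect : ∫ t in Iic (-a), f t = ∫ t in Ioi a, f t := by
    rw [← integral_comp_neg_Ioi]
    exact integral_congr_ae (.of_forall heven)
  have h_right : ∫ t in Ioi (-a), sign (a + t) * f t = ∫ t in Ioi (-a), f t :=
    setIntegral_congr_fun measurableSet_Ioi fun t (ht : -a < t) => by
      rw [sign_of_pos (by linarith), one_mul]
  rw [← intervalIntegral.integral_Iic_add_Ioi hsf.integrableOn hsf.integrableOn, h_left, h_right,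
    h_reflect, ← intervalIntegral.integral_Ioi_sub_Ioi' hf.integrableOn hf.integrableOn]
  ring

lemma integral_comp_sub_div (f : ℝ → ℝ) (b s : ℝ) :
    ∫ y, f ((y - b) / s) = |s| * ∫ t, f t := by
  rw [integral_sub_right_eq_self (fun y => f (y / s)) b, Measure.integral_comp_div, smul_eq_mul]

lemma integral_sign_mul_comp_affine_of_even {f : ℝ → ℝ} (hf : Integrable f)
    (heven : f.Even) {s : ℝ} (hs : 0 < s) (b : ℝ) :
    ∫ y, sign y * f ((y - b) / s) = s * ∫ t in -(b / s)..b / s, f t := by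
  have h_shift : ∀ y,
      sign y * f ((y - b) / s) = sign (b / s + (y - b) / s) * f ((y - b) / s) := fun y => by
    rw [← sign_mul_of_pos hs (b / s + _), mul_add, mul_div_cancel₀ _ hs.ne',
      mul_div_cancel₀ _ hs.ne', add_sub_cancel]
  simp_rw [h_shift]
  rw [integral_comp_sub_div (fun t => sign (b / s + t) * f t),
    integral_sign_add_mul_of_even hf heven, abs_of_pos hs]

noncomputable def gaussExp (t : ℝ) : ℝ := exp (-(1 / 2) * t ^ 2)

lemma even_gaussExp : Function.Even gaussExp := fun t => by simp [gaussExp]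

lemma gaussExp_pos (t : ℝ) : 0 < gaussExp t := exp_pos _

lemma gaussExp_le_one (t : ℝ) : gaussExp t ≤ 1 :=
  exp_le_one_iff.2 (by nlinarith [sq_nonneg t])

@[fun_prop]
lemma continuous_gaussExp : Continuous gaussExp := by unfold gaussExp; fun_prop

lemma integrable_gaussExp : Integrable gaussExp :=
  integrable_exp_neg_mul_sq (by norm_num)

lemma integrable_abs_mul_gaussExp : Integrable fun x => |x| * gaussExp x := by
  simpa only [gaussExp, norm_mul, Real.norm_eq_abs, abs_of_pos (exp_pos _)] using
    (integrable_mul_exp_neg_mul_sq (b := 1 / 2) (by norm_num)).norm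

lemma integral_Ioi_mul_exp_neg_mul_sq {b : ℝ} (hb : 0 < b) :
    ∫ r in Ioi (0 : ℝ), r * exp (-b * r ^ 2) = (2 * b)⁻¹ := by
  have h := integral_mul_cexp_neg_mul_sq (b := (b : ℂ)) (by simpa using hb)
  exact_mod_cast h

lemma integral_abs_mul_exp_neg_mul_sq {b : ℝ} (hb : 0 < b) :
    ∫ x, |x| * exp (-b * x ^ 2) = b⁻¹ := by
  have h := integral_comp_abs (f := fun r => r * exp (-b * r ^ 2))
  simp only [sq_abs] at h
  rw [h, integral_Ioi_mul_exp_neg_mul_sq hb]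
  field_simp

lemma integral_gaussExp_mul_abs_mul_gaussExp (u : ℝ) :
    ∫ x, gaussExp x * (|x| * gaussExp (u * x)) = 2 / (1 + u ^ 2) := by
  have h : ∀ x,
      gaussExp x * (|x| * gaussExp (u * x)) = |x| * exp (-((1 + u ^ 2) / 2) * x ^ 2) := fun x => by
    rw [gaussExp, gaussExp, mul_left_comm, ← exp_add]
    ring_nf
  simp_rw [h]
  rw [integral_abs_mul_exp_neg_mul_sq (by positivity)]
  field_simp

lemma sign_mul_intervalIntegral_comp_mul_right (f : ℝ → ℝ) (c x : ℝ) :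
    sign x * ∫ t in -(c * x)..c * x, f t = ∫ u in -c..c, |x| * f (u * x) := by
  rcases eq_or_ne x 0 with rfl | hx
  · simp
  rw [intervalIntegral.integral_const_mul, intervalIntegral.integral_comp_mul_right _ hx,
    smul_eq_mul, neg_mul, ← mul_assoc]
  congr 1
  rcases hx.lt_or_gt with hx | hx
  · rw [sign_of_neg hx, abs_of_neg hx, neg_mul, mul_inv_cancel₀ hx.ne]
  · rw [sign_of_pos hx, abs_of_pos hx, mul_inv_cancel₀ hx.ne']

lemma integrable_gaussExp_mul_abs_mul_gaussExp_mul (a b : ℝ) :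
    Integrable (Function.uncurry fun u x => gaussExp x * (|x| * gaussExp (u * x)))
      ((volume.restrict (uIoc a b)).prod volume) := by
  have : IsFiniteMeasure (volume.restrict (uIoc a b)) :=
    isFiniteMeasure_restrict.2 (by simp [Real.volume_uIoc])
  have h_bound : Integrable (fun p : ℝ × ℝ => (1 : ℝ) * (|p.2| * gaussExp p.2))
      ((volume.restrict (uIoc a b)).prod volume) :=
    (integrable_const 1).mul_prod integrable_abs_mul_gaussExp
  refine h_bound.mono' (by fun_prop) (.of_forall fun p => ?_)
  simp only [Function.uncurry, norm_mul, norm_of_nonneg (gaussExp_pos _).le, Real.norm_eq_abs,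
    abs_abs, one_mul]
  calc gaussExp p.2 * (|p.2| * gaussExp (p.1 * p.2)) ≤ gaussExp p.2 * (|p.2| * 1) := by
        gcongr
        · exact (gaussExp_pos _).le
        · exact gaussExp_le_one _
    _ = |p.2| * gaussExp p.2 := by ring

lemma integral_sign_mul_gaussExp_mul_intervalIntegral (c : ℝ) :
    ∫ x, sign x * gaussExp x * ∫ t in -(c * x)..c * x, gaussExp t = 4 * arctan c := by
  have h_int := integrable_gaussExp_mul_abs_mul_gaussExp_mul (-c) c
  calc ∫ x, sign x * gaussExp x * ∫ t in -(c * x)..c * x, gaussExp t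
      = ∫ x, ∫ u in -c..c, gaussExp x * (|x| * gaussExp (u * x)) := by
        congr 1 with x
        rw [mul_comm (sign x), mul_assoc, sign_mul_intervalIntegral_comp_mul_right,
          ← intervalIntegral.integral_const_mul]
    _ = ∫ u in -c..c, 2 / (1 + u ^ 2) := by
        rw [← intervalIntegral_integral_swap h_int]
        simp_rw [integral_gaussExp_mul_abs_mul_gaussExp]
    _ = 2 * ∫ u in -c..c, 1 / (1 + u ^ 2) := by
        simp_rw [← intervalIntegral.integral_const_mul, mul_one_div]
    _ = 4 * arctan c := by
        rw [integral_one_div_one_add_sq, arctan_neg]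
        ring

noncomputable def biGaussianDensity (ρ : ℝ) (p : ℝ × ℝ) : ℝ :=
  (2 * π * √(1 - ρ ^ 2))⁻¹ *
    exp (-(p.1 ^ 2 + p.2 ^ 2 - 2 * ρ * p.1 * p.2) / (2 * (1 - ρ ^ 2)))

lemma biGaussianDensity_nonneg (ρ : ℝ) (p : ℝ × ℝ) : 0 ≤ biGaussianDensity ρ p := by
  unfold biGaussianDensity; positivity

lemma biGaussian_of_mem_Ioo {ρ : ℝ} (hρ : ρ ∈ Ioo (-1) 1) :
    biGaussian ρ = volume.withDensity fun p => ENNReal.ofReal (biGaussianDensity ρ p) := by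
  rw [biGaussian, if_neg hρ.2.ne, if_neg hρ.1.ne']
  rfl

lemma biGaussianDensity_eq {ρ : ℝ} (hρ : ρ ∈ Ioo (-1) 1) (x y : ℝ) :
    biGaussianDensity ρ (x, y) =
      (2 * π * √(1 - ρ ^ 2))⁻¹ *
        (gaussExp x * gaussExp ((y - ρ * x) / √(1 - ρ ^ 2))) := by
  have hs : 0 < 1 - ρ ^ 2 := by nlinarith [hρ.1, hρ.2]
  rw [biGaussianDensity, gaussExp, gaussExp, ← exp_add, div_pow, sq_sqrt hs.le]
  congr 2
  field_simp
  ring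

lemma integrable_gaussExp_mul_gaussExp_comp_affine {s : ℝ} (hs : 0 < s) (ρ : ℝ) :
    Integrable (fun p : ℝ × ℝ => gaussExp p.1 * gaussExp ((p.2 - ρ * p.1) / s))
      (volume.prod volume) := by
  refine (integrable_prod_iff (by fun_prop)).2 ⟨.of_forall fun x => ?_, ?_⟩
  · exact ((integrable_gaussExp.comp_div hs.ne').comp_sub_right (ρ * x)).const_mul (gaussExp x)
  · have h_norm : ∀ x, ∫ y, ‖gaussExp x * gaussExp ((y - ρ * x) / s)‖ =
        gaussExp x * (s * ∫ t, gaussExp t) := fun x => by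
      simp only [norm_mul, Real.norm_eq_abs, abs_of_pos (gaussExp_pos _)]
      rw [integral_const_mul, integral_comp_sub_div, abs_of_pos hs]
    simp_rw [h_norm]
    exact integrable_gaussExp.mul_const _

lemma integral_sign_mul_sign_mul_biGaussianDensity {ρ : ℝ} (hρ : ρ ∈ Ioo (-1) 1) :
    ∫ p, biGaussianDensity ρ p * (sign p.1 * sign p.2) = 2 / π * arcsin ρ := by
  set s := √(1 - ρ ^ 2)
  have hs : 0 < s := sqrt_pos.2 (by nlinarith [hρ.1, hρ.2])
  set G : ℝ × ℝ → ℝ := fun p => gaussExp p.1 * gaussExp ((p.2 - ρ * p.1) / s)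
  have hG : Integrable G (volume.prod volume) := integrable_gaussExp_mul_gaussExp_comp_affine hs ρ
  have h_inner : ∀ x, ∫ y, G (x, y) * (sign x * sign y) =
      s * (sign x * gaussExp x * ∫ t in -(ρ / s * x)..ρ / s * x, gaussExp t) := fun x => by
    have h_split : ∀ y, G (x, y) * (sign x * sign y) =
        sign x * gaussExp x * (sign y * gaussExp ((y - ρ * x) / s)) := fun y => by
      simp only [G]; ring
    simp_rw [h_split]
    rw [integral_const_mul,
      integral_sign_mul_comp_affine_of_even integrable_gaussExp even_gaussExp hs,
      mul_div_right_comm]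
    ring
  calc ∫ p, biGaussianDensity ρ p * (sign p.1 * sign p.2)
      = (2 * π * s)⁻¹ * ∫ p, G p * (sign p.1 * sign p.2) := by
        rw [← integral_const_mul]
        congr 1 with ⟨x, y⟩
        rw [biGaussianDensity_eq hρ, mul_assoc]
    _ = (2 * π * s)⁻¹ * ∫ x, ∫ y, G (x, y) * (sign x * sign y) := by
        rw [Measure.volume_eq_prod, integral_prod]
        exact hG.mul_bdd (measurable_sign_mul_sign.aestronglyMeasurable)
          (.of_forall fun p => abs_sign_mul_sign_le_one p.1 p.2)
    _ = (2 * π * s)⁻¹ * (s * (4 * arctan (ρ / s))) := by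
        simp_rw [h_inner, integral_const_mul, integral_sign_mul_gaussExp_mul_intervalIntegral]
    _ = 2 / π * arcsin ρ := by
        rw [arcsin_eq_arctan hρ]
        field_simp
        ring

lemma ae_sign_mul_sign_self_gaussianReal : ∀ᵐ x ∂gaussianReal 0 1, sign x * sign x = 1 := by
  have h_atom : gaussianReal 0 1 {0} = 0 :=
    gaussianReal_absolutelyContinuous 0 one_ne_zero volume_singleton
  filter_upwards [measure_eq_zero_iff_ae_notMem.1 h_atom] with x hx
  rcases sign_apply_eq_of_ne_zero x hx with h | h <;> rw [h] <;> norm_num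

lemma integral_sign_mul_sign_biGaussian {ρ : ℝ} (hρ : ρ ∈ Icc (-1) 1) :
    ∫ p, sign p.1 * sign p.2 ∂biGaussian ρ = 2 / π * arcsin ρ := by
  have h_meas := measurable_sign_mul_sign
  rcases hρ.2.eq_or_lt with rfl | hρ₁
  · rw [biGaussian, if_pos rfl, integral_map (by fun_prop) h_meas.aestronglyMeasurable,
      integral_congr_ae ae_sign_mul_sign_self_gaussianReal, arcsin_one]
    simp [field]
  rcases hρ.1.eq_or_lt with rfl | hρ₀
  · have h_anti : ∀ᵐ x ∂gaussianReal 0 1, sign x * sign (-x) = -1 := by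
      filter_upwards [ae_sign_mul_sign_self_gaussianReal] with x hx
      rw [sign_neg, mul_neg, hx]
    rw [biGaussian, if_neg (by norm_num), if_pos rfl,
      integral_map (by fun_prop) h_meas.aestronglyMeasurable, integral_congr_ae h_anti,
      arcsin_neg, arcsin_one]
    simp [field]
  have hρ' : ρ ∈ Ioo (-1) 1 := ⟨hρ₀, hρ₁⟩
  have h_dens_meas : Measurable fun p => ENNReal.ofReal (biGaussianDensity ρ p) := by
    unfold biGaussianDensity; fun_prop
  rw [biGaussian_of_mem_Ioo hρ', integral_withDensity_eq_integral_toReal_smul h_dens_meas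
    (.of_forall fun _ => ENNReal.ofReal_lt_top)]
  simp_rw [ENNReal.toReal_ofReal (biGaussianDensity_nonneg _ _), smul_eq_mul]
  exact integral_sign_mul_sign_mul_biGaussianDensity hρ'

theorem sign_mul_sign_expectation_general {Ω : Type*} [MeasurableSpace Ω] (μ : Measure Ω)
    (X Y : Ω → ℝ) (hX : Measurable X) (hY : Measurable Y)
    (ρ : ℝ) (hρ : ρ ∈ Set.Icc (-1 : ℝ) 1)
    (hlaw : μ.map (fun ω => (X ω, Y ω)) = biGaussian ρ) :
    ∫ ω, Real.sign (X ω) * Real.sign (Y ω) ∂μ = (2 / π) * Real.arcsin ρ := by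
  rw [← integral_sign_mul_sign_biGaussian hρ, ← hlaw,
    integral_map (hX.prodMk hY).aemeasurable measurable_sign_mul_sign.aestronglyMeasurable]

theorem sign_mul_sign_expectation {Ω : Type*} [MeasurableSpace Ω] (μ : Measure Ω)
    [IsProbabilityMeasure μ] (X Y : Ω → ℝ) (hX : Measurable X) (hY : Measurable Y)
    (ρ : ℝ) (hρ : ρ ∈ Set.Icc (-1 : ℝ) 1)
    (hlaw : μ.map (fun ω => (X ω, Y ω)) = biGaussian ρ) :
    ∫ ω, Real.sign (X ω) * Real.sign (Y ω) ∂μ = (2 / π) * Real.arcsin ρ :=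
  sign_mul_sign_expectation_general μ X Y hX hY ρ hρ hlaw
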